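/- For β ∈ (0,1), convergence of probability measures on ℝ^d in the metric ‖·‖_{β,var} is equivalent to weak convergence: μ_n → μ weakly if and only if ‖μ_n − μ‖_{β,var} → 0. -/

import Mathlib

open MeasureTheory Filter
open scoped Topology

/-- `holderNormLE β φ M` says that the `β`-Hölder norm of `φ`
(sup norm plus `β`-Hölder seminorm) is at most `M`. -/
def holderNormLE {d : ℕ} (β : ℝ) (φ : EuclideanSpace ℝ (Fin d) → ℝ) (M : ℝ) : Prop :=
  ∃ C₁ C₂ : ℝ, 0 ≤ C₁ ∧ 0 ≤ C₂ ∧ C₁ + C₂ ≤ M ∧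
    (∀ x, |φ x| ≤ C₁) ∧ ∀ x y, |φ x - φ y| ≤ C₂ * dist x y ^ β

/-- The dual `C^β` distance `‖μ - ν‖_{β,var}`: the supremum of `|∫ φ dμ - ∫ φ dν|`
over (measurable) `φ` with `‖φ‖_{C^β} ≤ 1`. -/
noncomputable def betaVar {d : ℕ} (β : ℝ)
    (μ ν : Measure (EuclideanSpace ℝ (Fin d))) : ℝ :=
  ⨆ φ : {φ : EuclideanSpace ℝ (Fin d) → ℝ // holderNormLE β φ 1 ∧ Measurable φ},
    |(∫ x, φ.1 x ∂μ) - ∫ x, φ.1 x ∂ν|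

open Set Metric
open scoped ENNReal

section Aux
variable {d : ℕ}

local notation "E" => EuclideanSpace ℝ (Fin d)

lemma integrable_bdd {μ : Measure E} [IsProbabilityMeasure μ] {φ : E → ℝ} {C : ℝ}
    (hm : Measurable φ) (hb : ∀ x, |φ x| ≤ C) : Integrable φ μ :=
  ⟨hm.aestronglyMeasurable, HasFiniteIntegral.of_bounded (C := C)
    (Filter.Eventually.of_forall fun x => by simpa [Real.norm_eq_abs] using hb x)⟩

lemma abs_integral_bdd {μ : Measure E} [IsProbabilityMeasure μ] {φ : E → ℝ} {C : ℝ}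
    (hm : Measurable φ) (hb : ∀ x, |φ x| ≤ C) : |∫ x, φ x ∂μ| ≤ C := by
  have := norm_integral_le_of_norm_le_const (μ := μ) (f := φ) (C := C)
    (Filter.Eventually.of_forall fun x => by simpa [Real.norm_eq_abs] using hb x)
  simpa [Real.norm_eq_abs, measure_univ] using this

lemma holder_zero (β : ℝ) : holderNormLE (d := d) β 0 1 := by
  refine ⟨0, 0, le_refl _, le_refl _, by norm_num, fun x => by simp, fun x y => by simp⟩

instance {β : ℝ} : Nonempty {φ : E → ℝ // holderNormLE β φ 1 ∧ Measurable φ} :=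
  ⟨⟨0, holder_zero β, measurable_const⟩⟩

lemma betaVar_bddAbove (β : ℝ) (μ ν : Measure E) [IsProbabilityMeasure μ]
    [IsProbabilityMeasure ν] :
    BddAbove (Set.range fun φ : {φ : E → ℝ // holderNormLE β φ 1 ∧ Measurable φ} =>
      |(∫ x, φ.1 x ∂μ) - ∫ x, φ.1 x ∂ν|) := by
  refine ⟨2, fun r hr => ?_⟩
  obtain ⟨⟨φ, ⟨C₁, C₂, hC₁, hC₂, hsum, hb, _⟩, hm⟩, rfl⟩ := hr
  have hC₁1 : C₁ ≤ 1 := by linarith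
  have hb' : ∀ x, |φ x| ≤ 1 := fun x => (hb x).trans hC₁1
  calc |(∫ x, φ x ∂μ) - ∫ x, φ x ∂ν| ≤ |∫ x, φ x ∂μ| + |∫ x, φ x ∂ν| := abs_sub _ _
    _ ≤ 1 + 1 := add_le_add (abs_integral_bdd hm hb') (abs_integral_bdd hm hb')
    _ = 2 := by norm_num

lemma le_betaVar {β : ℝ} (μ ν : Measure E) [IsProbabilityMeasure μ] [IsProbabilityMeasure ν]
    {φ : E → ℝ} (hφ : holderNormLE β φ 1) (hm : Measurable φ) :
    |(∫ x, φ x ∂μ) - ∫ x, φ x ∂ν| ≤ betaVar β μ ν :=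
  le_ciSup (betaVar_bddAbove β μ ν) (⟨φ, hφ, hm⟩ :
    {φ : E → ℝ // holderNormLE β φ 1 ∧ Measurable φ})

lemma betaVar_nonneg {β : ℝ} (μ ν : Measure E) [IsProbabilityMeasure μ]
    [IsProbabilityMeasure ν] : 0 ≤ betaVar β μ ν := by
  have := le_betaVar (β := β) μ ν (holder_zero β) measurable_const
  simpa using this

lemma betaVar_comm {β : ℝ} (μ ν : Measure E) : betaVar β μ ν = betaVar β ν μ := by
  unfold betaVar
  congr 1
  ext φ
  rw [abs_sub_comm]

lemma integral_sub_le_mul_betaVar {β : ℝ} (μ ν : Measure E) [IsProbabilityMeasure μ]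
    [IsProbabilityMeasure ν] {φ : E → ℝ} {M : ℝ} (hM : 0 < M)
    (hφ : holderNormLE β φ M) (hm : Measurable φ) :
    |(∫ x, φ x ∂μ) - ∫ x, φ x ∂ν| ≤ M * betaVar β μ ν := by
  obtain ⟨C₁, C₂, hC₁, hC₂, hsum, hb, hH⟩ := hφ
  have key : holderNormLE β (fun x => φ x / M) 1 := by
    refine ⟨C₁ / M, C₂ / M, div_nonneg hC₁ hM.le, div_nonneg hC₂ hM.le, ?_, fun x => ?_,
      fun x y => ?_⟩
    · rw [← add_div, div_le_one hM]
      exact hsum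
    · rw [abs_div, abs_of_pos hM]
      gcongr
      exact hb x
    · simp only [← sub_div, abs_div, abs_of_pos hM, div_mul_eq_mul_div]
      gcongr
      exact hH x y
  have hint : ∀ (κ : Measure E), IsProbabilityMeasure κ → ∫ x, φ x / M ∂κ = (∫ x, φ x ∂κ) / M :=
    fun κ _ => integral_div M φ
  have h2 := le_betaVar μ ν key (hm.div_const M)
  rw [hint μ inferInstance, hint ν inferInstance, div_sub_div_same, abs_div, abs_of_pos hM,
    div_le_iff₀ hM] at h2
  linarith [h2]

lemma integral_sub_le_of_LP {β ε : ℝ} (hβ0 : 0 < β) (hε : 0 < ε)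
    (μ ν : Measure E) [IsProbabilityMeasure μ] [IsProbabilityMeasure ν]
    {φ : E → ℝ} (hφ : holderNormLE β φ 1) (hm : Measurable φ)
    (hLP : levyProkhorovEDist μ ν < ENNReal.ofReal ε) :
    (∫ x, φ x ∂μ) - ∫ x, φ x ∂ν ≤ ε ^ β + 2 * ε := by
  obtain ⟨C₁, C₂, hC₁, hC₂, hsum, hb, hH⟩ := hφ
  have hC₁1 : C₁ ≤ 1 := by linarith
  have hC₂1 : C₂ ≤ 1 := by linarith
  set ψ : E → ℝ := fun x => φ x + C₁ with hψdef
  have hψm : Measurable ψ := hm.add_const C₁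
  have hψ0 : ∀ x, 0 ≤ ψ x := fun x => by
    have := abs_le.mp (hb x)
    simp only [hψdef]
    linarith [this.1]
  have hψ2 : ∀ x, ψ x ≤ 2 := fun x => by
    have := abs_le.mp (hb x)
    simp only [hψdef]
    linarith [this.2]
  set δ : ℝ := C₂ * ε ^ β with hδdef
  have hδ0 : 0 ≤ δ := mul_nonneg hC₂ (Real.rpow_nonneg hε.le β)
  -- measurable sets
  have hmbl : ∀ t : ℝ, MeasurableSet {a : E | t < ψ a} := fun t =>
    measurableSet_lt measurable_const hψm
  -- pointwise comparison of distribution functions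
  have hpt : ∀ t ∈ Ioi (0:ℝ), μ {a | t < ψ a} ≤
      ν {a | t - δ < ψ a} + (Ioc (0:ℝ) 2).indicator (fun _ => ENNReal.ofReal ε) t := by
    intro t ht
    by_cases ht2 : t ≤ 2
    · have h1 : μ {a | t < ψ a} ≤ ν (thickening (ENNReal.ofReal ε).toReal {a | t < ψ a})
          + ENNReal.ofReal ε := left_measure_le_of_levyProkhorovEDist_lt hLP (hmbl t)
      have h2 : thickening (ENNReal.ofReal ε).toReal {a | t < ψ a} ⊆ {a | t - δ < ψ a} := by
        rw [ENNReal.toReal_ofReal hε.le]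
        intro x hx
        obtain ⟨z, hz, hdz⟩ := mem_thickening_iff.mp hx
        have hrw : dist x z ^ β ≤ ε ^ β :=
          Real.rpow_le_rpow dist_nonneg hdz.le hβ0.le
        have : |φ x - φ z| ≤ C₂ * ε ^ β := (hH x z).trans (mul_le_mul_of_nonneg_left hrw hC₂)
        have hx' : ψ z - δ ≤ ψ x := by
          have := abs_le.mp this
          simp only [hψdef, hδdef]
          linarith [this.1]
        exact lt_of_lt_of_le (by simpa using sub_lt_sub_right hz δ) hx'
      have hind : (Ioc (0:ℝ) 2).indicator (fun _ => ENNReal.ofReal ε) t = ENNReal.ofReal ε :=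
        Set.indicator_of_mem (Set.mem_Ioc.mpr ⟨ht, ht2⟩) _
      rw [hind]
      exact h1.trans (add_le_add_left (measure_mono h2) _)
    · have : {a : E | t < ψ a} = ∅ := by
        ext a
        simp only [mem_setOf_eq, mem_empty_iff_false, iff_false, not_lt]
        exact (hψ2 a).trans (le_of_not_ge ht2)
      simp [this]
  -- measurability of distribution functions
  have hνmble : Measurable fun t : ℝ => ν {a | t < ψ a} :=
    Antitone.measurable (fun s t hst => measure_mono fun a ha => lt_of_le_of_lt hst ha)
  have hμlayer : ∫⁻ x, ENNReal.ofReal (ψ x) ∂μ = ∫⁻ t in Ioi 0, μ {a | t < ψ a} :=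
    lintegral_eq_lintegral_meas_lt μ (Filter.Eventually.of_forall hψ0) hψm.aemeasurable
  have hνlayer : ∫⁻ x, ENNReal.ofReal (ψ x) ∂ν = ∫⁻ t in Ioi 0, ν {a | t < ψ a} :=
    lintegral_eq_lintegral_meas_lt ν (Filter.Eventually.of_forall hψ0) hψm.aemeasurable
  have hshift : ∫⁻ t in Ioi (0:ℝ), ν {a | t - δ < ψ a} = ∫⁻ s in Ioi (-δ), ν {a | s < ψ a} := by
    have h := (measurePreserving_sub_right (volume : Measure ℝ) δ).setLIntegral_comp_emb
      (MeasurableEquiv.subRight δ).measurableEmbedding (fun s => ν {a | s < ψ a}) (Ioi 0)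
    rw [Set.image_sub_const_Ioi, zero_sub] at h
    exact h
  have hsplit : ∫⁻ s in Ioi (-δ), ν {a | s < ψ a}
      = (∫⁻ s in Ioc (-δ) 0, ν {a | s < ψ a}) + ∫⁻ s in Ioi 0, ν {a | s < ψ a} := by
    rw [← lintegral_union measurableSet_Ioi (Set.Ioc_disjoint_Ioi le_rfl),
      Set.Ioc_union_Ioi_eq_Ioi (neg_nonpos.mpr hδ0)]
  have hIoc : ∫⁻ s in Ioc (-δ) 0, ν {a | s < ψ a} ≤ ENNReal.ofReal δ := by
    calc ∫⁻ s in Ioc (-δ) 0, ν {a | s < ψ a} ≤ ∫⁻ _ in Ioc (-δ) 0, 1 :=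
      setLIntegral_mono measurable_const (fun s _ => prob_le_one)
    _ = ENNReal.ofReal δ := by
      rw [setLIntegral_one, Real.volume_Ioc]
      norm_num
  have hind : ∫⁻ t in Ioi (0:ℝ), (Ioc (0:ℝ) 2).indicator (fun _ => ENNReal.ofReal ε) t
      = ENNReal.ofReal ε * ENNReal.ofReal 2 := by
    rw [lintegral_indicator measurableSet_Ioc _, Measure.restrict_restrict measurableSet_Ioc,
      setLIntegral_const]
    have h2 : Ioc (0:ℝ) 2 ∩ Ioi 0 = Ioc 0 2 :=
      Set.inter_eq_self_of_subset_left Set.Ioc_subset_Ioi_self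
    rw [h2, Real.volume_Ioc]
    norm_num
  have hmain : ∫⁻ t in Ioi (0:ℝ), μ {a | t < ψ a}
      ≤ (∫⁻ t in Ioi (0:ℝ), ν {a | t < ψ a}) + ENNReal.ofReal δ
        + ENNReal.ofReal ε * ENNReal.ofReal 2 := by
    calc ∫⁻ t in Ioi (0:ℝ), μ {a | t < ψ a}
        ≤ ∫⁻ t in Ioi (0:ℝ), (ν {a | t - δ < ψ a}
            + (Ioc (0:ℝ) 2).indicator (fun _ => ENNReal.ofReal ε) t) :=
          setLIntegral_mono ((hνmble.comp (measurable_id.sub_const δ)).add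
            (measurable_const.indicator measurableSet_Ioc)) hpt
      _ = (∫⁻ t in Ioi (0:ℝ), ν {a | t - δ < ψ a})
            + ∫⁻ t in Ioi (0:ℝ), (Ioc (0:ℝ) 2).indicator (fun _ => ENNReal.ofReal ε) t :=
          lintegral_add_right _ (measurable_const.indicator measurableSet_Ioc)
      _ = (∫⁻ s in Ioc (-δ) 0, ν {a | s < ψ a}) + (∫⁻ s in Ioi (0:ℝ), ν {a | s < ψ a})
            + ENNReal.ofReal ε * ENNReal.ofReal 2 := by rw [hshift, hsplit, hind]
      _ ≤ (∫⁻ t in Ioi (0:ℝ), ν {a | t < ψ a}) + ENNReal.ofReal δ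
            + ENNReal.ofReal ε * ENNReal.ofReal 2 := by
          refine add_le_add ?_ le_rfl
          rw [add_comm]
          exact add_le_add le_rfl hIoc
  have hfinν : ∫⁻ x, ENNReal.ofReal (ψ x) ∂ν ≠ ∞ := by
    refine ((lintegral_mono (g := fun _ => ENNReal.ofReal 2)
      (fun x => ENNReal.ofReal_le_ofReal (hψ2 x))).trans_lt ?_).ne
    simp [lintegral_const]
  have hineq : (∫⁻ x, ENNReal.ofReal (ψ x) ∂μ)
      ≤ (∫⁻ x, ENNReal.ofReal (ψ x) ∂ν) + ENNReal.ofReal (δ + 2 * ε) := by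
    rw [hμlayer, hνlayer]
    refine hmain.trans (le_of_eq ?_)
    rw [ENNReal.ofReal_add hδ0 (by positivity), ← add_assoc]
    congr 1
    rw [← ENNReal.ofReal_mul hε.le]
    congr 1
    ring
  have hLμ : ∫ x, ψ x ∂μ = (∫⁻ x, ENNReal.ofReal (ψ x) ∂μ).toReal :=
    integral_eq_lintegral_of_nonneg_ae (Filter.Eventually.of_forall hψ0)
      hψm.aestronglyMeasurable
  have hLν : ∫ x, ψ x ∂ν = (∫⁻ x, ENNReal.ofReal (ψ x) ∂ν).toReal :=
    integral_eq_lintegral_of_nonneg_ae (Filter.Eventually.of_forall hψ0)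
      hψm.aestronglyMeasurable
  have htoReal := ENNReal.toReal_mono (by
      exact ENNReal.add_ne_top.mpr ⟨hfinν, ENNReal.ofReal_ne_top⟩) hineq
  rw [ENNReal.toReal_add hfinν ENNReal.ofReal_ne_top,
    ENNReal.toReal_ofReal (by positivity)] at htoReal
  have hψle : ∫ x, ψ x ∂μ ≤ ∫ x, ψ x ∂ν + (δ + 2 * ε) := by
    rw [hLμ, hLν]
    exact htoReal
  have hintφμ : Integrable φ μ := integrable_bdd hm hb
  have hintφν : Integrable φ ν := integrable_bdd hm hb
  have hsubμ : ∫ x, ψ x ∂μ = (∫ x, φ x ∂μ) + C₁ := by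
    rw [hψdef, integral_add hintφμ (integrable_const C₁), integral_const]
    simp [measure_univ]
  have hsubν : ∫ x, ψ x ∂ν = (∫ x, φ x ∂ν) + C₁ := by
    rw [hψdef, integral_add hintφν (integrable_const C₁), integral_const]
    simp [measure_univ]
  have hδle : δ ≤ ε ^ β := by
    rw [hδdef]
    nlinarith [Real.rpow_nonneg hε.le β]
  rw [hsubμ, hsubν] at hψle
  linarith

lemma betaVar_le_of_LP {β ε : ℝ} (hβ0 : 0 < β) (hε : 0 < ε)
    (μ ν : Measure E) [IsProbabilityMeasure μ] [IsProbabilityMeasure ν]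
    (hLP : levyProkhorovEDist μ ν < ENNReal.ofReal ε) :
    betaVar β μ ν ≤ ε ^ β + 2 * ε := by
  refine ciSup_le fun ⟨φ, hφ, hm⟩ => abs_sub_le_iff.mpr ⟨?_, ?_⟩
  · exact integral_sub_le_of_LP hβ0 hε μ ν hφ hm hLP
  · exact integral_sub_le_of_LP hβ0 hε ν μ hφ hm (levyProkhorovEDist_comm μ ν ▸ hLP)

lemma meas_le_meas_thickening_add {β : ℝ} (hβ0 : 0 < β) (hβ1 : β < 1)
    (μ ν : Measure E) [IsProbabilityMeasure μ] [IsProbabilityMeasure ν]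
    {δ : ℝ} (hδ : 0 < δ) {B : Set E} (hB : MeasurableSet B) :
    μ B ≤ ν (thickening δ B) + ENNReal.ofReal ((2 + 1 / δ) * betaVar β μ ν) := by
  rcases B.eq_empty_or_nonempty with rfl | hBne
  · simp
  set φ : E → ℝ := fun x => max (1 - infDist x B / δ) 0 with hφdef
  have hφ0 : ∀ x, 0 ≤ φ x := fun x => le_max_right _ _
  have hφ1 : ∀ x, φ x ≤ 1 := fun x => by
    apply max_le _ zero_le_one
    have : 0 ≤ infDist x B / δ := div_nonneg infDist_nonneg hδ.le
    linarith
  have hφcont : Continuous φ := ((continuous_const.sub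
    ((continuous_infDist_pt B).div_const δ)).max continuous_const)
  have hφm : Measurable φ := hφcont.measurable
  have hLip : ∀ x y, |φ x - φ y| ≤ (1 / δ) * dist x y := by
    intro x y
    have h1 : |φ x - φ y| ≤ |(1 - infDist x B / δ) - (1 - infDist y B / δ)| :=
      abs_max_sub_max_le_abs _ _ _
    have h2 : (1 - infDist x B / δ) - (1 - infDist y B / δ)
        = (infDist y B - infDist x B) / δ := by ring
    rw [h2, abs_div, abs_of_pos hδ] at h1
    refine h1.trans ?_
    rw [div_le_iff₀ hδ]
    have h3 : |infDist y B - infDist x B| ≤ dist y x := by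
      apply abs_sub_le_iff.mpr
      constructor
      · linarith [infDist_le_infDist_add_dist (x := y) (y := x) (s := B)]
      · linarith [infDist_le_infDist_add_dist (x := x) (y := y) (s := B),
          dist_comm x y]
    calc |infDist y B - infDist x B| ≤ dist y x := h3
      _ = dist x y := dist_comm y x
      _ ≤ 1 / δ * dist x y * δ := by
        rw [div_mul_eq_mul_div, one_mul, div_mul_eq_mul_div, mul_div_assoc,
          div_self hδ.ne', mul_one]
  have hφholder : holderNormLE β φ (2 + 1 / δ) := by
    refine ⟨1, 1 + 1 / δ, zero_le_one, by positivity, by linarith, fun x => ?_, fun x y => ?_⟩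
    · rw [abs_of_nonneg (hφ0 x)]; exact hφ1 x
    · rcases eq_or_ne x y with rfl | hxy
      · simp [Real.rpow_nonneg dist_nonneg]
        positivity
      have hd0 : 0 < dist x y := dist_pos.mpr hxy
      rcases le_or_gt (dist x y) 1 with hd1 | hd1
      · have : dist x y ≤ dist x y ^ β := by
          calc dist x y = dist x y ^ (1:ℝ) := (Real.rpow_one _).symm
            _ ≤ dist x y ^ β := Real.rpow_le_rpow_of_exponent_ge hd0 hd1 hβ1.le
        calc |φ x - φ y| ≤ (1/δ) * dist x y := hLip x y
          _ ≤ (1/δ) * dist x y ^ β := by gcongr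
          _ ≤ (1 + 1/δ) * dist x y ^ β := by
            have := Real.rpow_nonneg (dist_nonneg (x := x) (y := y)) β
            nlinarith
      · have h1 : (1:ℝ) ≤ dist x y ^ β :=
          Real.one_le_rpow hd1.le hβ0.le
        have h2 : |φ x - φ y| ≤ 1 := by
          apply abs_sub_le_iff.mpr
          have a1 := hφ0 x; have a2 := hφ0 y; have a3 := hφ1 x; have a4 := hφ1 y
          constructor <;> linarith
        calc |φ x - φ y| ≤ 1 := h2
          _ ≤ dist x y ^ β := h1
          _ ≤ (1 + 1/δ) * dist x y ^ β := by
            nlinarith [mul_nonneg (one_div_nonneg.mpr hδ.le)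
              (Real.rpow_nonneg (dist_nonneg (x := x) (y := y)) β)]
  have hM : (0:ℝ) < 2 + 1/δ := by positivity
  have hbd : ∀ x, |φ x| ≤ 1 := fun x => by rw [abs_of_nonneg (hφ0 x)]; exact hφ1 x
  have hintμ : Integrable φ μ := integrable_bdd hφm hbd
  have hintν : Integrable φ ν := integrable_bdd hφm hbd
  have hφoneB : ∀ x ∈ B, φ x = 1 := fun x hx => by
    simp [hφdef, infDist_zero_of_mem hx]
  have hBle : (μ B).toReal ≤ ∫ x, φ x ∂μ := by
    have : ∫ x, B.indicator (fun _ => (1:ℝ)) x ∂μ = (μ B).toReal := by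
      rw [integral_indicator_const _ hB]
      simp [measureReal_def]
    rw [← this]
    refine integral_mono ((integrable_const (1:ℝ)).indicator hB) hintμ (fun x => ?_)
    by_cases hx : x ∈ B
    · rw [Set.indicator_of_mem hx, hφoneB x hx]
    · rw [Set.indicator_of_notMem hx]; exact hφ0 x
  have hup : ∫ x, φ x ∂ν ≤ (ν (thickening δ B)).toReal := by
    have : ∫ x, (thickening δ B).indicator (fun _ => (1:ℝ)) x ∂ν
        = (ν (thickening δ B)).toReal := by
      rw [integral_indicator_const _ isOpen_thickening.measurableSet]
      simp [measureReal_def]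
    rw [← this]
    refine integral_mono hintν
      ((integrable_const (1:ℝ)).indicator isOpen_thickening.measurableSet) (fun x => ?_)
    by_cases hx : x ∈ thickening δ B
    · rw [Set.indicator_of_mem hx]; exact hφ1 x
    · rw [Set.indicator_of_notMem hx]
      have hge : δ ≤ infDist x B := by
        by_contra hcon
        exact hx ((mem_thickening_iff_infDist_lt hBne).mpr (lt_of_not_ge hcon))
      have : 1 - infDist x B / δ ≤ 0 := by
        rw [sub_nonpos, le_div_iff₀ hδ, one_mul]
        exact hge
      simp only [hφdef]
      exact max_le this le_rfl
  have hbv0 : 0 ≤ betaVar β μ ν := betaVar_nonneg μ ν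
  have hmid := integral_sub_le_mul_betaVar μ ν hM hφholder hφm
  have hreal : (μ B).toReal ≤ (ν (thickening δ B)).toReal + (2 + 1/δ) * betaVar β μ ν := by
    have := abs_sub_le_iff.mp hmid |>.1
    linarith
  calc μ B = ENNReal.ofReal (μ B).toReal := (ENNReal.ofReal_toReal (measure_ne_top μ B)).symm
    _ ≤ ENNReal.ofReal ((ν (thickening δ B)).toReal + (2 + 1/δ) * betaVar β μ ν) :=
        ENNReal.ofReal_le_ofReal hreal
    _ = ENNReal.ofReal (ν (thickening δ B)).toReal
        + ENNReal.ofReal ((2 + 1/δ) * betaVar β μ ν) :=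
        ENNReal.ofReal_add ENNReal.toReal_nonneg (by positivity)
    _ = ν (thickening δ B) + ENNReal.ofReal ((2 + 1/δ) * betaVar β μ ν) := by
        rw [ENNReal.ofReal_toReal (measure_ne_top ν _)]

end Aux

/-- For `β ∈ (0,1)`, convergence of probability measures on `ℝ^d` in the metric
`‖·‖_{β,var}` is equivalent to weak convergence. -/
theorem betaVar_tendsto_iff_weak {d : ℕ} (β : ℝ) (hβ0 : 0 < β) (hβ1 : β < 1)
    (μn : ℕ → ProbabilityMeasure (EuclideanSpace ℝ (Fin d)))
    (μ : ProbabilityMeasure (EuclideanSpace ℝ (Fin d))) :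
    Tendsto μn atTop (𝓝 μ) ↔
      Tendsto (fun n => betaVar β (μn n : Measure (EuclideanSpace ℝ (Fin d)))
        (μ : Measure (EuclideanSpace ℝ (Fin d)))) atTop (𝓝 0) := by
  have hiff : Tendsto μn atTop (𝓝 μ) ↔
      Tendsto (fun n => levyProkhorovDist ((μn n : Measure (EuclideanSpace ℝ (Fin d)))) (μ : Measure (EuclideanSpace ℝ (Fin d)))) atTop (𝓝 0) :=
by
    rw [(LevyProkhorov.probabilityMeasureHomeomorph
      (Ω := (EuclideanSpace ℝ (Fin d)))).isInducing.tendsto_nhds_iff,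
      tendsto_iff_dist_tendsto_zero]
    exact tendsto_congr (fun n => rfl)
  rw [hiff]
  constructor
  · intro h'
    rw [Metric.tendsto_nhds] at h' ⊢
    intro ε hε
    set c : ℝ := min ((ε/4) ^ (β⁻¹)) (ε/4) with hc
    have hc0 : 0 < c := lt_min (Real.rpow_pos_of_pos (by linarith) _) (by linarith)
    filter_upwards [h' c hc0] with n hn
    have hd : levyProkhorovDist (μn n : Measure (EuclideanSpace ℝ (Fin d))) (μ : Measure (EuclideanSpace ℝ (Fin d))) < c := by
      have habs : |levyProkhorovDist ((μn n : Measure (EuclideanSpace ℝ (Fin d))))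
          (μ : Measure (EuclideanSpace ℝ (Fin d)))| < c := by
        simpa [Real.dist_eq] using hn
      exact lt_of_abs_lt habs
    have hLP : levyProkhorovEDist (μn n : Measure (EuclideanSpace ℝ (Fin d))) (μ : Measure (EuclideanSpace ℝ (Fin d))) < ENNReal.ofReal c := by
      have hne := levyProkhorovEDist_ne_top (μn n : Measure (EuclideanSpace ℝ (Fin d))) (μ : Measure (EuclideanSpace ℝ (Fin d)))
      rw [← ENNReal.ofReal_toReal hne]
      exact (ENNReal.ofReal_lt_ofReal_iff hc0).mpr hd
    have hb := betaVar_le_of_LP hβ0 hc0 _ _ hLP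
    have h1 : c ^ β ≤ ε/4 := by
      have hcle : c ≤ (ε/4) ^ (β⁻¹) := min_le_left _ _
      calc c ^ β ≤ ((ε/4) ^ (β⁻¹)) ^ β := Real.rpow_le_rpow hc0.le hcle hβ0.le
        _ = (ε/4) ^ (β⁻¹ * β) := (Real.rpow_mul (by positivity) β⁻¹ β).symm
        _ = ε/4 := by rw [inv_mul_cancel₀ hβ0.ne', Real.rpow_one]
    have h2 : c ≤ ε/4 := min_le_right _ _
    rw [Real.dist_eq, sub_zero, abs_of_nonneg (betaVar_nonneg _ _)]
    calc betaVar β (μn n : Measure (EuclideanSpace ℝ (Fin d))) (μ : Measure (EuclideanSpace ℝ (Fin d))) ≤ c ^ β + 2*c := hb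
      _ ≤ ε/4 + 2*(ε/4) := by linarith
      _ < ε := by linarith
  · intro h
    rw [Metric.tendsto_nhds] at h ⊢
    intro ε hε
    set c : ℝ := ε/2 with hcdef
    have hc0 : 0 < c := by positivity
    have hpos : 0 < c / (2 + 1/c) := by positivity
    filter_upwards [h _ hpos] with n hn
    have hbv : betaVar β (μn n : Measure (EuclideanSpace ℝ (Fin d))) (μ : Measure (EuclideanSpace ℝ (Fin d))) < c / (2+1/c) := by
      rw [Real.dist_eq, sub_zero, abs_of_nonneg (betaVar_nonneg _ _)] at hn
      exact hn
    have hbv0 := betaVar_nonneg (β := β) ((μn n : Measure (EuclideanSpace ℝ (Fin d)))) (μ : Measure (EuclideanSpace ℝ (Fin d)))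
    have hLPle : levyProkhorovEDist (μn n : Measure (EuclideanSpace ℝ (Fin d))) (μ : Measure (EuclideanSpace ℝ (Fin d))) ≤ ENNReal.ofReal c := by
      apply levyProkhorovEDist_le_of_forall
      intro ε' B hlt hfin hmeas
      have hcε' : c < ε'.toReal :=
        (ENNReal.ofReal_lt_iff_lt_toReal hc0.le hfin.ne).mp hlt
      have hε'0 : 0 < ε'.toReal := hc0.trans hcε'
      have key : (2 + 1/ε'.toReal) * betaVar β (μn n : Measure (EuclideanSpace ℝ (Fin d))) (μ : Measure (EuclideanSpace ℝ (Fin d)))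
          ≤ ε'.toReal := by
        have h1 : 1/ε'.toReal ≤ 1/c := one_div_le_one_div_of_le hc0 hcε'.le
        have h2 : (2 + 1/ε'.toReal) * betaVar β (μn n : Measure (EuclideanSpace ℝ (Fin d))) (μ : Measure (EuclideanSpace ℝ (Fin d)))
            ≤ (2 + 1/c) * betaVar β (μn n : Measure (EuclideanSpace ℝ (Fin d))) (μ : Measure (EuclideanSpace ℝ (Fin d))) := by gcongr
        have h3 : (2 + 1/c) * betaVar β (μn n : Measure (EuclideanSpace ℝ (Fin d))) (μ : Measure (EuclideanSpace ℝ (Fin d))) < c := by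
          rw [lt_div_iff₀ (by positivity)] at hbv
          calc (2 + 1/c) * betaVar β (μn n : Measure (EuclideanSpace ℝ (Fin d))) (μ : Measure (EuclideanSpace ℝ (Fin d)))
              = betaVar β (μn n : Measure (EuclideanSpace ℝ (Fin d))) (μ : Measure (EuclideanSpace ℝ (Fin d))) * (2 + 1/c) := mul_comm _ _
            _ < c := hbv
        linarith
      have hofR : ENNReal.ofReal ((2 + 1/ε'.toReal)
          * betaVar β (μn n : Measure (EuclideanSpace ℝ (Fin d))) (μ : Measure (EuclideanSpace ℝ (Fin d)))) ≤ ε' := by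
        calc ENNReal.ofReal _ ≤ ENNReal.ofReal ε'.toReal := ENNReal.ofReal_le_ofReal key
          _ = ε' := ENNReal.ofReal_toReal hfin.ne
      constructor
      · refine (meas_le_meas_thickening_add hβ0 hβ1
          ((μn n : Measure (EuclideanSpace ℝ (Fin d))))
          (μ : Measure (EuclideanSpace ℝ (Fin d))) hε'0 hmeas).trans ?_
        exact add_le_add le_rfl hofR
      · refine (meas_le_meas_thickening_add hβ0 hβ1 (μ : Measure (EuclideanSpace ℝ (Fin d))) ((μn n : Measure (EuclideanSpace ℝ (Fin d))))
          hε'0 hmeas).trans ?_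
        refine add_le_add le_rfl ?_
        rw [betaVar_comm]
        exact hofR
    have hdist : levyProkhorovDist (μn n : Measure (EuclideanSpace ℝ (Fin d))) (μ : Measure (EuclideanSpace ℝ (Fin d))) ≤ c := by
      calc levyProkhorovDist (μn n : Measure (EuclideanSpace ℝ (Fin d))) (μ : Measure (EuclideanSpace ℝ (Fin d)))
          ≤ (ENNReal.ofReal c).toReal := ENNReal.toReal_mono ENNReal.ofReal_ne_top hLPle
        _ = c := ENNReal.toReal_ofReal hc0.le
    rw [Real.dist_eq, sub_zero, abs_of_nonneg (show (0:ℝ) ≤ levyProkhorovDist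
      ((μn n : Measure (EuclideanSpace ℝ (Fin d)))) (μ : Measure (EuclideanSpace ℝ (Fin d)))
      from ENNReal.toReal_nonneg)]
    calc levyProkhorovDist (μn n : Measure (EuclideanSpace ℝ (Fin d))) (μ : Measure (EuclideanSpace ℝ (Fin d))) ≤ c := hdist
      _ < ε := by rw [hcdef]; linarith
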